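/- arXiv:1810.07481 — 2 statements merged into one kernel-verified Lean document; each statement's English description precedes it below -/
import Mathlib

section
/- For a linear multi-class classifier f(x) = Wx + b with decision argmax_r f_r(x), if x is classified as class c (strictly), then the minimal l_p-norm of a perturbation delta such that max_{l != c} f_l(x+delta) >= f_c(x+delta) equals min over s != c of |<w_c - w_s, x> + b_c - b_s| / ||w_c - w_s||_q, where q is the Hölder conjugate of p. -/
/-! By Hölder's inequality `|⟨w, δ⟩| ≤ ‖w‖_q ‖δ‖_p`, a perturbation `δ` that closes the margin
`g = ⟨w_c - w_s, x⟩ + b_c - b_s > 0` towards class `s` has `‖δ‖_p ≥ g / ‖w_c - w_s‖_q`. The bound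
is attained by `δ = -(g / ‖w‖_q) • u` for a norming vector `u` of `w` (`‖u‖_p = 1`,
`⟨w, u⟩ = ‖w‖_q`): a signed coordinate vector for `p = 1`, the sign vector of `w` for `p = ∞`,
and the equality case of Hölder's inequality otherwise. The minimal perturbation is then the least
of these finitely many minima, one for each `s ≠ c`. -/

open scoped BigOperators ENNReal

/-- The `l_p` norm of a vector in `ℝ^d`. -/
noncomputable def pnorm (p : ℝ≥0∞) {d : ℕ} (x : Fin d → ℝ) : ℝ :=
  ‖(WithLp.equiv p (Fin d → ℝ)).symm x‖

/-- Standard inner product on `ℝ^d`. -/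
noncomputable def dotp {d : ℕ} (w x : Fin d → ℝ) : ℝ := ∑ i, w i * x i

open Finset ENNReal

theorem csInf_biUnion_eq_csInf_image {α ι : Type*} [ConditionallyCompleteLinearOrder α]
    {S : Set ι} (hS : S.Finite) {A : ι → Set α} {m : ι → α} (hm : ∀ i ∈ S, IsLeast (A i) (m i)) :
    sInf (⋃ i ∈ S, A i) = sInf (m '' S) := by
  rcases S.eq_empty_or_nonempty with rfl | hne
  · simp
  obtain ⟨i₀, hi₀, hmin⟩ := S.exists_min_image m hS hne
  have hunion : IsLeast (⋃ i ∈ S, A i) (m i₀) := by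
    refine ⟨Set.mem_biUnion hi₀ (hm i₀ hi₀).1, ?_⟩
    simp only [mem_lowerBounds, Set.mem_iUnion₂]
    rintro r ⟨i, hi, hr⟩
    exact (hmin i hi).trans ((hm i hi).2 hr)
  have himage : IsLeast (m '' S) (m i₀) :=
    ⟨Set.mem_image_of_mem m hi₀, Set.forall_mem_image.2 hmin⟩
  rw [hunion.csInf_eq, himage.csInf_eq]

section

variable {d : ℕ}

lemma pnorm_eq_sum {p : ℝ≥0∞} (hp : 0 < p.toReal) (x : Fin d → ℝ) :
    pnorm p x = (∑ i, |x i| ^ p.toReal) ^ (1 / p.toReal) := by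
  simp [pnorm, PiLp.norm_eq_sum hp, Real.norm_eq_abs]

lemma pnorm_top (x : Fin d → ℝ) : pnorm ∞ x = ⨆ i, |x i| := by
  simp [pnorm, PiLp.norm_eq_ciSup, Real.norm_eq_abs]

lemma pnorm_one (x : Fin d → ℝ) : pnorm 1 x = ∑ i, |x i| := by
  simp [pnorm_eq_sum (p := 1) (by simp)]

lemma pnorm_smul {p : ℝ≥0∞} [Fact (1 ≤ p)] (t : ℝ) (x : Fin d → ℝ) :
    pnorm p (t • x) = |t| * pnorm p x := by
  simp [pnorm, norm_smul]

lemma pnorm_pos {p : ℝ≥0∞} [Fact (1 ≤ p)] {x : Fin d → ℝ} (hx : x ≠ 0) : 0 < pnorm p x := by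
  simpa [pnorm] using hx

lemma dotp_smul_right (w x : Fin d → ℝ) (t : ℝ) : dotp w (t • x) = t * dotp w x := by
  simp [dotp, mul_sum, mul_left_comm]

lemma abs_sign_le_one (x : ℝ) : |(SignType.sign x : ℝ)| ≤ 1 := by
  rcases lt_trichotomy x 0 with h | h | h <;> simp [h]

lemma abs_dotp_le_sum_abs_mul_abs (w x : Fin d → ℝ) : |dotp w x| ≤ ∑ i, |w i| * |x i| := by
  simpa only [dotp, abs_mul] using abs_sum_le_sum_abs (fun i => w i * x i) univ

lemma sum_abs_mul_abs_le_iSup_mul_sum (w x : Fin d → ℝ) :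
    ∑ i, |w i| * |x i| ≤ (⨆ i, |w i|) * ∑ i, |x i| := by
  rw [mul_sum]
  gcongr with i
  exact le_ciSup (Set.finite_range fun i => |w i|).bddAbove i

lemma holderConjugate_cases (p q : ℝ≥0∞) [p.HolderConjugate q] :
    (p = 1 ∧ q = ∞) ∨ (p = ∞ ∧ q = 1) ∨ (p ≠ ∞ ∧ q ≠ ∞) := by
  by_cases hp : p = ∞
  · exact Or.inr (Or.inl ⟨hp, (HolderConjugate.eq_top_iff_eq_one p q).1 hp⟩)
  by_cases hq : q = ∞
  · exact Or.inl ⟨(HolderConjugate.eq_top_iff_eq_one q p).1 hq, hq⟩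
  exact Or.inr (Or.inr ⟨hp, hq⟩)

theorem abs_dotp_le_pnorm_mul_pnorm (p q : ℝ≥0∞) [p.HolderConjugate q] (w x : Fin d → ℝ) :
    |dotp w x| ≤ pnorm q w * pnorm p x := by
  refine (abs_dotp_le_sum_abs_mul_abs w x).trans ?_
  obtain ⟨rfl, rfl⟩ | ⟨rfl, rfl⟩ | ⟨hp, hq⟩ := holderConjugate_cases p q
  · rw [pnorm_top, pnorm_one]
    exact sum_abs_mul_abs_le_iSup_mul_sum w x
  · rw [pnorm_top, pnorm_one, mul_comm]
    simpa only [mul_comm |w _|] using sum_abs_mul_abs_le_iSup_mul_sum x w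
  · have hqp : q.toReal.HolderConjugate p.toReal := HolderConjugate.toReal_of_ne_top hq hp
    rw [pnorm_eq_sum hqp.pos, pnorm_eq_sum hqp.symm.pos]
    simpa only [abs_abs] using Real.inner_le_Lp_mul_Lq_of_nonneg univ hqp
      (fun i _ => abs_nonneg (w i)) (fun i _ => abs_nonneg (x i))

lemma exists_pnorm_one_le_one_dotp_eq_pnorm_top (w : Fin d → ℝ) :
    ∃ u, pnorm 1 u ≤ 1 ∧ dotp w u = pnorm ∞ w := by
  rcases isEmpty_or_nonempty (Fin d) with hd | hd
  · exact ⟨0, by simp [pnorm_one], by simp [dotp, pnorm_top]⟩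
  obtain ⟨j, hj⟩ := Finite.exists_max fun i => |w i|
  refine ⟨Pi.single j (SignType.sign (w j) : ℝ), ?_, ?_⟩
  · rw [pnorm_one, sum_eq_single j (fun i _ hi => by simp [hi]) (by simp)]
    simpa using abs_sign_le_one (w j)
  · have hsup : ⨆ i, |w i| = |w j| :=
      le_antisymm (ciSup_le hj) (le_ciSup (Set.finite_range fun i => |w i|).bddAbove j)
    rw [pnorm_top, hsup, dotp, sum_eq_single j (fun i _ hi => by simp [hi]) (by simp)]
    simp [self_mul_sign]

lemma exists_pnorm_top_le_one_dotp_eq_pnorm_one (w : Fin d → ℝ) :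
    ∃ u, pnorm ∞ u ≤ 1 ∧ dotp w u = pnorm 1 w := by
  refine ⟨fun i => SignType.sign (w i), ?_, by simp [dotp, pnorm_one, self_mul_sign]⟩
  rw [pnorm_top]
  rcases isEmpty_or_nonempty (Fin d) with hd | hd
  · simp
  exact ciSup_le fun i => abs_sign_le_one (w i)

lemma exists_pnorm_le_one_dotp_eq_pnorm_of_ne_top {p q : ℝ≥0∞} (hp : p ≠ ∞) (hq : q ≠ ∞)
    [p.HolderConjugate q] (w : Fin d → ℝ) : ∃ u, pnorm p u ≤ 1 ∧ dotp w u = pnorm q w := by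
  have hqp : q.toReal.HolderConjugate p.toReal := HolderConjugate.toReal_of_ne_top hq hp
  obtain ⟨⟨g, hg, hgw⟩, -⟩ := NNReal.isGreatest_Lp univ (fun i => ‖w i‖₊) hqp
  refine ⟨fun i => SignType.sign (w i) * g i, ?_, ?_⟩
  · rw [pnorm_eq_sum hqp.symm.pos]
    refine Real.rpow_le_one (by positivity) ?_ hqp.symm.one_div_nonneg
    calc ∑ i, |(SignType.sign (w i) : ℝ) * g i| ^ p.toReal
        ≤ ∑ i, (g i : ℝ) ^ p.toReal := by
          gcongr with i
          rw [abs_mul, NNReal.abs_eq]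
          exact mul_le_of_le_one_left (g i).2 (abs_sign_le_one (w i))
      _ ≤ 1 := by exact_mod_cast hg
  · rw [pnorm_eq_sum hqp.pos]
    have := congrArg ((↑) : NNReal → ℝ) hgw
    push_cast at this
    simpa [dotp, ← mul_assoc, self_mul_sign] using this

lemma exists_pnorm_le_one_dotp_eq_pnorm (p q : ℝ≥0∞) [p.HolderConjugate q] (w : Fin d → ℝ) :
    ∃ u, pnorm p u ≤ 1 ∧ dotp w u = pnorm q w := by
  obtain ⟨rfl, rfl⟩ | ⟨rfl, rfl⟩ | ⟨hp, hq⟩ := holderConjugate_cases p q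
  exacts [exists_pnorm_one_le_one_dotp_eq_pnorm_top w, exists_pnorm_top_le_one_dotp_eq_pnorm_one w,
    exists_pnorm_le_one_dotp_eq_pnorm_of_ne_top hp hq w]

lemma exists_pnorm_eq_one_dotp_eq_pnorm (p q : ℝ≥0∞) [p.HolderConjugate q] {w : Fin d → ℝ}
    (hw : w ≠ 0) : ∃ u, pnorm p u = 1 ∧ dotp w u = pnorm q w := by
  have : Fact (1 ≤ q) := ⟨HolderConjugate.one_le q p⟩
  obtain ⟨u, hu, hwu⟩ := exists_pnorm_le_one_dotp_eq_pnorm p q w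
  refine ⟨u, le_antisymm hu (le_of_mul_le_mul_left ?_ (pnorm_pos (p := q) hw)), hwu⟩
  simpa only [mul_one, ← hwu] using (le_abs_self _).trans (abs_dotp_le_pnorm_mul_pnorm p q w u)

theorem isLeast_pnorm_of_add_dotp_nonpos (p q : ℝ≥0∞) [p.HolderConjugate q] {w : Fin d → ℝ}
    (hw : w ≠ 0) {g : ℝ} (hg : 0 ≤ g) :
    IsLeast {r | ∃ δ, g + dotp w δ ≤ 0 ∧ r = pnorm p δ} (g / pnorm q w) := by
  have : Fact (1 ≤ p) := ⟨HolderConjugate.one_le p q⟩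
  have : Fact (1 ≤ q) := ⟨HolderConjugate.one_le q p⟩
  have hw' : 0 < pnorm q w := pnorm_pos hw
  obtain ⟨u, hu, hwu⟩ := exists_pnorm_eq_one_dotp_eq_pnorm p q hw
  constructor
  · refine ⟨-(g / pnorm q w) • u, ?_, ?_⟩
    · rw [dotp_smul_right, hwu, neg_mul, div_mul_cancel₀ _ hw'.ne', add_neg_cancel]
    · rw [pnorm_smul, hu, abs_neg, abs_of_nonneg (div_nonneg hg hw'.le), mul_one]
  · rintro _ ⟨δ, hδ, rfl⟩
    rw [div_le_iff₀' hw']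
    calc g ≤ -dotp w δ := by linarith
      _ ≤ |dotp w δ| := neg_le_abs _
      _ ≤ _ := abs_dotp_le_pnorm_mul_pnorm p q w δ

lemma dotp_eq_dotProduct (w x : Fin d → ℝ) : dotp w x = w ⬝ᵥ x := rfl

end

theorem stmt2_general {d K : ℕ} (p q : ℝ≥0∞) (hpq : 1/p + 1/q = 1)
    (W : Fin K → Fin d → ℝ) (b : Fin K → ℝ) (c : Fin K) (x : Fin d → ℝ)
    (hclass : ∀ s : Fin K, s ≠ c → dotp (W s) x + b s < dotp (W c) x + b c)
    (hW : ∀ s : Fin K, s ≠ c → W c ≠ W s) :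
    sInf {r : ℝ | ∃ δ : Fin d → ℝ,
        (∃ s : Fin K, s ≠ c ∧ dotp (W c) (x + δ) + b c ≤ dotp (W s) (x + δ) + b s) ∧
        r = pnorm p δ} =
      sInf {r : ℝ | ∃ s : Fin K, s ≠ c ∧
        r = |dotp (W c - W s) x + (b c - b s)| / pnorm q (W c - W s)} := by
  have : p.HolderConjugate q := holderConjugate_iff.2 (by simpa only [one_div] using hpq)
  set g : Fin K → ℝ := fun s => dotp (W c - W s) x + (b c - b s)
  have hmargin : ∀ s δ, dotp (W c) (x + δ) + b c ≤ dotp (W s) (x + δ) + b s ↔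
      g s + dotp (W c - W s) δ ≤ 0 := by
    intro s δ
    simp only [g, dotp_eq_dotProduct, sub_dotProduct, dotProduct_add]
    constructor <;> intro h <;> linarith
  have hleast : ∀ s ∈ {s | s ≠ c}, IsLeast
      {r | ∃ δ, dotp (W c) (x + δ) + b c ≤ dotp (W s) (x + δ) + b s ∧ r = pnorm p δ}
      (|g s| / pnorm q (W c - W s)) := by
    intro s hs
    have hg : 0 < g s := by
      have := hclass s hs
      simp only [g, dotp_eq_dotProduct, sub_dotProduct] at this ⊢
      linarith
    simp only [hmargin, abs_of_pos hg]
    exact isLeast_pnorm_of_add_dotp_nonpos p q (sub_ne_zero.2 (hW s hs)) hg.le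
  convert csInf_biUnion_eq_csInf_image (Set.toFinite {s | s ≠ c}) hleast using 1 <;>
    congr 1 <;> ext r
  · simp only [Set.mem_ofPred_eq, Set.mem_iUnion, exists_prop]
    tauto
  · simp only [Set.mem_ofPred_eq, Set.mem_image, eq_comm, g]

/-- Minimal adversarial perturbation for a linear multi-class classifier. -/
theorem stmt2 {d K : ℕ} (hK : 2 ≤ K) (p q : ℝ≥0∞) (hp : 1 ≤ p) (hpq : 1/p + 1/q = 1)
    (W : Fin K → Fin d → ℝ) (b : Fin K → ℝ) (c : Fin K) (x : Fin d → ℝ)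
    (hclass : ∀ s : Fin K, s ≠ c → dotp (W s) x + b s < dotp (W c) x + b c)
    (hW : ∀ s : Fin K, s ≠ c → W c ≠ W s) :
    sInf {r : ℝ | ∃ δ : Fin d → ℝ,
        (∃ s : Fin K, s ≠ c ∧ dotp (W c) (x + δ) + b c ≤ dotp (W s) (x + δ) + b s) ∧
        r = pnorm p δ} =
      sInf {r : ℝ | ∃ s : Fin K, s ≠ c ∧
        r = |dotp (W c - W s) x + (b c - b s)| / pnorm q (W c - W s)} :=
  stmt2_general p q hpq W b c x hclass hW
end

section
/- The function d-bar_D(x) = min_{s != y} (f_y(x) - f_s(x)) / ||V_y - V_s||_q, defined for an affine classifier f(z) = Vz + a, is nonnegative if and only if x is classified as class y (i.e. f_y(x) >= f_s(x) for all s != y), and is 1-Lipschitz with respect to the l_p-norm on R^d. -/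
/-! Writing `w_s = V_y - V_s`, the function `d̄_D` is the minimum over `s ≠ y` of
`x ↦ (⟪w_s, x⟫ + a_y - a_s) / ‖w_s‖_q` with `w_s ≠ 0`, so it is nonnegative exactly when every
numerator is. Each of these functions is `1`-Lipschitz for the `l_p`-norm by Hölder's inequality
`|⟪w, x - x'⟫| ≤ ‖w‖_q ‖x - x'‖_p`, and a minimum of finitely many `1`-Lipschitz functions is
`1`-Lipschitz. -/

open scoped BigOperators ENNReal

section FiniteInf

variable {ι : Type*} [Finite ι] {P : ι → Prop}

theorem le_sInf_exists_eq_iff (hP : ∃ i, P i) (g : ι → ℝ) (c : ℝ) :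
    c ≤ sInf {r | ∃ i, P i ∧ r = g i} ↔ ∀ i, P i → c ≤ g i := by
  have hfin : {r | ∃ i, P i ∧ r = g i}.Finite :=
    (Set.finite_range g).subset fun r ⟨i, _, hr⟩ => ⟨i, hr.symm⟩
  obtain ⟨i, hi⟩ := hP
  rw [le_csInf_iff hfin.bddBelow ⟨g i, i, hi, rfl⟩]
  exact ⟨fun h j hj => h _ ⟨j, hj, rfl⟩, fun h r ⟨j, hj, hr⟩ => hr ▸ h j hj⟩

theorem sInf_exists_eq_sub_le (hP : ∃ i, P i) {g h : ι → ℝ} {L : ℝ}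
    (hgh : ∀ i, P i → g i - h i ≤ L) :
    sInf {r | ∃ i, P i ∧ r = g i} - sInf {r | ∃ i, P i ∧ r = h i} ≤ L := by
  have hg : ∀ i, P i → sInf {r | ∃ i, P i ∧ r = g i} ≤ g i :=
    (le_sInf_exists_eq_iff hP g _).mp le_rfl
  rw [sub_le_comm, le_sInf_exists_eq_iff hP]
  intro i hi
  linarith [hg i hi, hgh i hi]

theorem abs_sInf_exists_eq_sub_le (hP : ∃ i, P i) {g h : ι → ℝ} {L : ℝ}
    (hgh : ∀ i, P i → |g i - h i| ≤ L) :
    |sInf {r | ∃ i, P i ∧ r = g i} - sInf {r | ∃ i, P i ∧ r = h i}| ≤ L :=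
  abs_sub_le_iff.mpr
    ⟨sInf_exists_eq_sub_le hP fun i hi => (abs_sub_le_iff.mp (hgh i hi)).1,
      sInf_exists_eq_sub_le hP fun i hi => (abs_sub_le_iff.mp (hgh i hi)).2⟩

end FiniteInf

-- Hölder's inequality for every `1 ≤ p ≤ ∞` at once (including `p = 1` and `p = ∞`), read off
-- from the norm bound of the duality pairing between `ℓ^q` and `ℓ^p`.
theorem abs_sum_mul_le_norm_toLp_mul_norm_toLp {ι : Type*} [Fintype ι] {p q : ℝ≥0∞}
    [hpq : p.HolderConjugate q] (w x : ι → ℝ) :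
    |∑ i, w i * x i| ≤ ‖WithLp.toLp q w‖ * ‖WithLp.toLp p x‖ := by
  have : Fact (1 ≤ p) := ⟨hpq.one_le⟩
  have : Fact (1 ≤ q) := ⟨hpq.symm.one_le⟩
  let B := lp.dualPairing q p (fun _ : ι => ContinuousLinearMap.mul ℝ ℝ) (K := 1)
    fun _ => ContinuousLinearMap.opNorm_mul_le ℝ ℝ
  let e : lp (fun _ : ι => ℝ) q := Equiv.lpPiLp.symm (WithLp.toLp q w)
  let f : lp (fun _ : ι => ℝ) p := Equiv.lpPiLp.symm (WithLp.toLp p x)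
  have hB : B e f = ∑ i, w i * x i := (lp.dualPairing_apply _ _ e f).trans (tsum_fintype _)
  calc |∑ i, w i * x i| = ‖B e f‖ := by rw [hB, Real.norm_eq_abs]
    _ ≤ ‖B‖ * ‖e‖ * ‖f‖ := B.le_opNorm₂ e f
    _ ≤ 1 * ‖e‖ * ‖f‖ := by gcongr; exact lp.norm_dualPairing _ _
    _ = ‖WithLp.toLp q w‖ * ‖WithLp.toLp p x‖ := by
      rw [one_mul, ← equiv_lpPiLp_norm e, ← equiv_lpPiLp_norm f]
      rfl

section AffineMargin

variable {d : ℕ} {p q : ℝ≥0∞}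

theorem pnorm_nonneg [Fact (1 ≤ q)] (v : Fin d → ℝ) : 0 ≤ pnorm q v :=
  norm_nonneg _

theorem pnorm_pos_s10 [Fact (1 ≤ q)] {v : Fin d → ℝ} (hv : v ≠ 0) : 0 < pnorm q v :=
  norm_pos_iff.mpr fun h => hv (WithLp.toLp_injective q (h.trans (WithLp.toLp_zero q).symm))

theorem abs_dotp_div_pnorm_le [hpq : p.HolderConjugate q] (w z : Fin d → ℝ) :
    |dotp w z / pnorm q w| ≤ pnorm p z := by
  have : Fact (1 ≤ p) := ⟨hpq.one_le⟩
  have : Fact (1 ≤ q) := ⟨hpq.symm.one_le⟩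
  rw [abs_div, abs_of_nonneg (pnorm_nonneg _)]
  exact div_le_of_le_mul₀ (pnorm_nonneg _) (pnorm_nonneg _)
    ((abs_sum_mul_le_norm_toLp_mul_norm_toLp w z).trans_eq (mul_comm _ _))

theorem abs_normalized_margin_sub_le [p.HolderConjugate q] (v u : Fin d → ℝ) (b c : ℝ)
    (x x' : Fin d → ℝ) :
    |((dotp v x + b) - (dotp u x + c)) / pnorm q (v - u) -
        ((dotp v x' + b) - (dotp u x' + c)) / pnorm q (v - u)| ≤ pnorm p (x - x') := by
  have hnum : ((dotp v x + b) - (dotp u x + c)) - ((dotp v x' + b) - (dotp u x' + c)) =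
      dotp (v - u) (x - x') := by
    simp only [dotp, ← dotProduct.eq_1, sub_dotProduct, dotProduct_sub]
    ring
  rw [← sub_div, hnum]
  exact abs_dotp_div_pnorm_le _ _

end AffineMargin

theorem stmt10_general {d K : ℕ} (p q : ℝ≥0∞) (hpq : 1/p + 1/q = 1)
    (V : Fin K → Fin d → ℝ) (a : Fin K → ℝ) (y : Fin K)
    (hV : ∀ s : Fin K, s ≠ y → V y ≠ V s) (hK : ∃ s : Fin K, s ≠ y)
    (dD : (Fin d → ℝ) → ℝ)
    (hdD : ∀ x, dD x = sInf {r : ℝ | ∃ s : Fin K, s ≠ y ∧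
        r = ((dotp (V y) x + a y) - (dotp (V s) x + a s)) / pnorm q (V y - V s)}) :
    (∀ x : Fin d → ℝ,
      0 ≤ dD x ↔ ∀ s : Fin K, s ≠ y → dotp (V s) x + a s ≤ dotp (V y) x + a y) ∧
    (∀ x x' : Fin d → ℝ, |dD x - dD x'| ≤ pnorm p (x - x')) := by
  have hconj : p.HolderConjugate q := ⟨by simpa only [one_div, inv_one] using hpq⟩
  have : Fact (1 ≤ q) := ⟨hconj.symm.one_le⟩
  refine ⟨fun x => ?_, fun x x' => ?_⟩
  · rw [hdD, le_sInf_exists_eq_iff hK]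
    refine forall₂_congr fun s hs => ?_
    rw [le_div_iff₀ (pnorm_pos_s10 (sub_ne_zero.mpr (hV s hs))), zero_mul, sub_nonneg]
  · rw [hdD, hdD]
    exact abs_sInf_exists_eq_sub_le hK fun s _ => abs_normalized_margin_sub_le _ _ _ _ x x'

/-- The signed margin d̄_D is nonnegative iff x is classified as y, and is
1-Lipschitz with respect to the l_p-norm. -/
theorem stmt10 {d K : ℕ} (p q : ℝ≥0∞) (hp : 1 ≤ p) (hpq : 1/p + 1/q = 1)
    (V : Fin K → Fin d → ℝ) (a : Fin K → ℝ) (y : Fin K)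
    (hV : ∀ s : Fin K, s ≠ y → V y ≠ V s) (hK : ∃ s : Fin K, s ≠ y)
    (dD : (Fin d → ℝ) → ℝ)
    (hdD : ∀ x, dD x = sInf {r : ℝ | ∃ s : Fin K, s ≠ y ∧
        r = ((dotp (V y) x + a y) - (dotp (V s) x + a s)) / pnorm q (V y - V s)}) :
    (∀ x : Fin d → ℝ,
      0 ≤ dD x ↔ ∀ s : Fin K, s ≠ y → dotp (V s) x + a s ≤ dotp (V y) x + a y) ∧
    (∀ x x' : Fin d → ℝ, |dD x - dD x'| ≤ pnorm p (x - x')) :=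
  stmt10_general p q hpq V a y hV hK dD hdD
end
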